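/- arXiv:2404.18332 — 2 statements merged into one kernel-verified Lean document; each statement's English description precedes it below -/
import Mathlib

section
/- Let K ⊆ ℝⁿ be a nonempty compact set, let a₁,…,a_m and R be real polynomials in n variables of degree at most d, suppose R(x) > 0 for all x ∈ K, and suppose there exists at least one Borel measure μ₀ supported in K with ∫ aᵢ dμ₀ = bᵢ for i = 1,…,m. Then the infimum of ∫ R dμ over all Borel measures μ supported in K satisfying ∫ aᵢ dμ = bᵢ for i = 1,…,m is attained by some such measure, and this minimum value equals the supremum of b₁λ₁ + ⋯ + b_mλ_m over all λ = (λ₁,…,λ_m) ∈ ℝᵐ such that R(x) − Σᵢ₌₁ᵐ λᵢ aᵢ(x) ≥ 0 for every x ∈ K. -/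
/-!
The moment vectors `∫ (a, R) dμ` of the finite measures supported in `K` are exactly the points of
the cone `Ici 0 • convexHull ((a, R) '' K)`: the average of `(a, R)` lies in the closed convex hull
of its values on `K`, and conversely every point of the cone is the moment vector of a finite
combination of Dirac masses. By Carathéodory the hull is compact, and as `R > 0` on `K` the cone is
closed, so the least `r` with `(b, r)` in the cone, which is the primal optimum, is attained.
For `p` below the optimum, `(b, p)` lies outside this closed convex cone; a separating functional,
scaled to have coefficient `-1` on the last coordinate, is a dual-feasible `λ` with `bᵀλ > p`.
-/

open MeasureTheory Set
open scoped Pointwise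

theorem isCompact_convexHull {E : Type*} [NormedAddCommGroup E] [NormedSpace ℝ E]
    [FiniteDimensional ℝ E] {s : Set E} (hs : IsCompact s) : IsCompact (convexHull ℝ s) := by
  let T (k : ℕ) : Set E := (fun p : (Fin k → ℝ) × (Fin k → E) => ∑ i, p.1 i • p.2 i) ''
    (stdSimplex ℝ (Fin k) ×ˢ univ.pi fun _ => s)
  have hT (k : ℕ) : IsCompact (T k) :=
    ((isCompact_stdSimplex ℝ (Fin k)).prod (isCompact_univ_pi fun _ => hs)).image (by fun_prop)
  have hT_sub (k : ℕ) : T k ⊆ convexHull ℝ s := by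
    rintro _ ⟨⟨w, z⟩, ⟨⟨hw₀, hw₁⟩, hz⟩, rfl⟩
    exact mem_convexHull_of_exists_fintype w z hw₀ hw₁ (fun i => hz i (mem_univ i)) rfl
  have hcara : convexHull ℝ s = ⋃ k ∈ Finset.range (Module.finrank ℝ E + 2), T k := by
    refine Subset.antisymm (fun x hx => ?_) (iUnion₂_subset fun k _ => hT_sub k)
    obtain ⟨ι, _, z, w, hzs, hai, hw₀, hw₁, rfl⟩ := eq_pos_convex_span_of_mem_convexHull hx
    have hcard : Fintype.card ι < Module.finrank ℝ E + 2 :=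
      Nat.lt_succ_of_le (hai.card_le_finrank_succ.trans
        (Nat.succ_le_succ (Submodule.finrank_le _)))
    let e := (Fintype.equivFin ι).symm
    refine mem_iUnion₂.2 ⟨_, Finset.mem_range.2 hcard, (w ∘ e, z ∘ e),
      ⟨⟨fun _ => (hw₀ _).le, ?_⟩, fun j _ => hzs (mem_range_self _)⟩, ?_⟩
    · simpa only [Function.comp_apply, e.sum_comp] using hw₁
    · exact e.sum_comp fun i => w i • z i
  rw [hcara]
  exact (Finset.range _).isCompact_biUnion fun k _ => hT k

section Cone

variable {E : Type*} [AddCommGroup E] [Module ℝ E]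

theorem Convex.Ici_smul {C : Set E} (hC : Convex ℝ C) : Convex ℝ (Ici (0 : ℝ) • C) := by
  rintro _ ⟨c₁, hc₁, y₁, hy₁, rfl⟩ _ ⟨c₂, hc₂, y₂, hy₂, rfl⟩ α β hα hβ hαβ
  rw [mem_Ici] at hc₁ hc₂
  obtain hc | hc := (by positivity : (0 : ℝ) ≤ α * c₁ + β * c₂).eq_or_lt
  · have h₁ : α * c₁ = 0 := by nlinarith
    have h₂ : β * c₂ = 0 := by nlinarith
    refine ⟨0, self_mem_Ici, y₁, hy₁, ?_⟩
    simp only [smul_smul, h₁, h₂, zero_smul, add_zero]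
  · refine ⟨α * c₁ + β * c₂, hc.le, (α * c₁ / (α * c₁ + β * c₂)) • y₁ +
      (β * c₂ / (α * c₁ + β * c₂)) • y₂, hC hy₁ hy₂ (by positivity) (by positivity)
        (by field_simp), ?_⟩
    simp only [smul_add, smul_smul]
    congr 2 <;> field_simp

theorem smul_mem_Ici_smul {C : Set E} {z : E} (hz : z ∈ Ici (0 : ℝ) • C) {t : ℝ}
    (ht : 0 ≤ t) : t • z ∈ Ici (0 : ℝ) • C := by
  obtain ⟨c, hc, y, hy, rfl⟩ := hz
  exact ⟨t * c, mul_nonneg ht hc, y, hy, (smul_smul t c y).symm⟩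

theorem le_of_mem_Ici_smul_convexHull (ℓ : E →ₗ[ℝ] ℝ) {G : Set (E × ℝ)} {z : E × ℝ}
    (hz : z ∈ Ici (0 : ℝ) • convexHull ℝ G) (hG : ∀ y ∈ G, ℓ y.1 ≤ y.2) : ℓ z.1 ≤ z.2 := by
  obtain ⟨c, hc, y, hy, rfl⟩ := hz
  have hhalf : Convex ℝ {y : E × ℝ | ℓ y.1 - y.2 ≤ 0} :=
    convex_halfSpace_le ((ℓ ∘ₗ LinearMap.fst ℝ E ℝ) - LinearMap.snd ℝ E ℝ).isLinear 0
  have hy' : ℓ y.1 ≤ y.2 :=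
    sub_nonpos.1 (convexHull_min (fun y hy => sub_nonpos.2 (hG y hy)) hhalf hy)
  simpa only [Prod.smul_fst, Prod.smul_snd, map_smul, smul_eq_mul] using
    mul_le_mul_of_nonneg_left hy' hc

theorem isClosed_Ici_smul_of_isCompact [TopologicalSpace E] [T2Space E] [ContinuousSMul ℝ E]
    {C : Set E} (hC : IsCompact C) (ℓ : E →L[ℝ] ℝ) (hpos : ∀ y ∈ C, 0 < ℓ y) :
    IsClosed (Ici (0 : ℝ) • C) := by
  rcases C.eq_empty_or_nonempty with rfl | hne
  · simp
  obtain ⟨y₀, hy₀, hmin⟩ := hC.exists_isMinOn hne ℓ.continuous.continuousOn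
  refine closure_subset_iff_isClosed.1 fun z hz => ?_
  -- near `z`, the cone lies in its compact truncation `Icc 0 ((ℓ z + 1) / ℓ y₀) • C`
  have hU : IsOpen {w | ℓ w < ℓ z + 1} := isOpen_lt ℓ.continuous continuous_const
  have hsub :
      {w | ℓ w < ℓ z + 1} ∩ Ici (0 : ℝ) • C ⊆ Icc 0 ((ℓ z + 1) / ℓ y₀) • C := by
    rintro _ ⟨hw, c, hc, y, hy, rfl⟩
    have hy₀y : ℓ y₀ ≤ ℓ y := hmin hy
    simp only [mem_ofPred_eq, map_smul, smul_eq_mul] at hw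
    rw [mem_Ici] at hc
    refine ⟨c, ⟨hc, (le_div_iff₀ (hpos y₀ hy₀)).2 ?_⟩, y, hy, rfl⟩
    nlinarith
  have hcpt : IsCompact (Icc 0 ((ℓ z + 1) / ℓ y₀) • C) := by
    rw [← image_smul_prod]
    exact (isCompact_Icc.prod hC).image continuous_smul
  exact smul_subset_smul_right Icc_subset_Ici_self <| hcpt.isClosed.closure_subset <|
    closure_mono hsub (hU.inter_closure ⟨lt_add_one (ℓ z), hz⟩)

end Cone

theorem exists_dual_lt_of_notMem_cone {E : Type*} [NormedAddCommGroup E] [NormedSpace ℝ E]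
    {S : Set (E × ℝ)} (hS : Convex ℝ S) (hSc : IsClosed S)
    (hsmul : ∀ z ∈ S, ∀ t : ℝ, 0 ≤ t → t • z ∈ S) {b : E} {p r : ℝ} (hr : (b, r) ∈ S)
    (hpr : p < r) (hp : (b, p) ∉ S) :
    ∃ ℓ : E →L[ℝ] ℝ, (∀ z ∈ S, ℓ z.1 ≤ z.2) ∧ p < ℓ b := by
  obtain ⟨f, u, hfS, hfu⟩ := geometric_hahn_banach_closed_point hS hSc hp
  have hu : 0 < u := by simpa using hfS 0 (by simpa using hsmul _ hr 0 le_rfl)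
  have hf_nonpos : ∀ z ∈ S, f z ≤ 0 := by
    intro z hz
    by_contra! h
    have := hfS _ (hsmul z hz (u / f z) (by positivity))
    rw [map_smul, smul_eq_mul, div_mul_cancel₀ _ h.ne'] at this
    exact lt_irrefl _ this
  set g : E →L[ℝ] ℝ := f.comp (ContinuousLinearMap.inl ℝ E ℝ)
  set κ := f (0, 1)
  have hf : ∀ y t, f (y, t) = g y + t * κ := by
    intro y t
    rw [show ((y, t) : E × ℝ) = (y, 0) + t • (0, 1) by simp, map_add, map_smul, smul_eq_mul]
    rfl
  have hκ : κ < 0 := by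
    have h₁ := hf_nonpos _ hr
    have h₂ := hu.trans hfu
    rw [hf] at h₁ h₂
    nlinarith
  refine ⟨(-κ)⁻¹ • g, fun z hz => ?_, ?_⟩
  · have := hf_nonpos z hz
    rw [← Prod.mk.eta (p := z), hf] at this
    change (-κ)⁻¹ * g z.1 ≤ z.2
    rw [inv_mul_le_iff₀ (neg_pos.2 hκ)]
    nlinarith
  · have := hu.trans hfu
    rw [hf] at this
    change p < (-κ)⁻¹ * g b
    rw [lt_inv_mul_iff₀ (neg_pos.2 hκ)]
    nlinarith

section ConicDuality

variable {ι : Type*} [Fintype ι] {G : Set ((ι → ℝ) × ℝ)}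

theorem sum_mul_le_of_mem_Ici_smul_convexHull {b : ι → ℝ} {r : ℝ}
    (hr : (b, r) ∈ Ici (0 : ℝ) • convexHull ℝ G) {lam : ι → ℝ}
    (hlam : ∀ z ∈ G, ∑ i, lam i * z.1 i ≤ z.2) : ∑ i, b i * lam i ≤ r := by
  have := le_of_mem_Ici_smul_convexHull (∑ i, lam i • LinearMap.proj i) hr (by simpa using hlam)
  simpa [mul_comm] using this

variable (hG : IsCompact G) (hGpos : ∀ z ∈ G, 0 < z.2)
include hG hGpos

theorem isClosed_Ici_smul_convexHull : IsClosed (Ici (0 : ℝ) • convexHull ℝ G) :=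
  isClosed_Ici_smul_of_isCompact (isCompact_convexHull hG) (ContinuousLinearMap.snd ℝ _ ℝ)
    fun _ hz => convexHull_min hGpos (convex_halfSpace_gt (LinearMap.snd ℝ _ ℝ).isLinear 0) hz

theorem csInf_mem_fiber_Ici_smul_convexHull {b : ι → ℝ} {r₀ : ℝ}
    (hr₀ : (b, r₀) ∈ Ici (0 : ℝ) • convexHull ℝ G) :
    sInf {r | (b, r) ∈ Ici (0 : ℝ) • convexHull ℝ G} ∈
      {r | (b, r) ∈ Ici (0 : ℝ) • convexHull ℝ G} := by
  refine ((isClosed_Ici_smul_convexHull hG hGpos).preimage (by fun_prop)).csInf_mem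
    ⟨r₀, hr₀⟩ ⟨0, fun r hr => ?_⟩
  simpa using sum_mul_le_of_mem_Ici_smul_convexHull hr (lam := 0) fun z hz => by
    simpa using (hGpos z hz).le

theorem csInf_fiber_eq_csSup_dual {b : ι → ℝ} {r₀ : ℝ}
    (hr₀ : (b, r₀) ∈ Ici (0 : ℝ) • convexHull ℝ G) :
    sInf {r | (b, r) ∈ Ici (0 : ℝ) • convexHull ℝ G} =
      sSup {s | ∃ lam : ι → ℝ, (∀ z ∈ G, ∑ i, lam i * z.1 i ≤ z.2) ∧
        s = ∑ i, b i * lam i} := by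
  classical
  set P := {r | (b, r) ∈ Ici (0 : ℝ) • convexHull ℝ G}
  set D := {s | ∃ lam : ι → ℝ, (∀ z ∈ G, ∑ i, lam i * z.1 i ≤ z.2) ∧ s = ∑ i, b i * lam i}
  have hweak : ∀ r ∈ P, ∀ s ∈ D, s ≤ r := by
    rintro r hr _ ⟨lam, hlam, rfl⟩
    exact sum_mul_le_of_mem_Ici_smul_convexHull hr hlam
  have hD₀ : (0 : ℝ) ∈ D := ⟨0, fun z hz => by simpa using (hGpos z hz).le, by simp⟩
  refine le_antisymm (le_of_forall_lt fun p hp => ?_)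
    (le_csInf ⟨r₀, hr₀⟩ fun r hr => csSup_le ⟨0, hD₀⟩ (hweak r hr))
  have hp_notMem : (b, p) ∉ Ici (0 : ℝ) • convexHull ℝ G :=
    fun h => hp.not_ge (csInf_le ⟨0, fun r hr => hweak r hr 0 hD₀⟩ h)
  obtain ⟨ℓ, hℓ_le, hpℓ⟩ := exists_dual_lt_of_notMem_cone
    (convex_convexHull ℝ G).Ici_smul (isClosed_Ici_smul_convexHull hG hGpos)
    (fun _ hz _ ht => smul_mem_Ici_smul hz ht)
    (csInf_mem_fiber_Ici_smul_convexHull hG hGpos hr₀) hp hp_notMem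
  have hℓ : ∀ y, ℓ y = ∑ i, ℓ (Pi.single i 1) * y i := fun y => by
    conv_lhs => rw [pi_eq_sum_univ' y]
    simp [mul_comm]
  refine hpℓ.trans_le
    (le_csSup ⟨r₀, hweak r₀ hr₀⟩ ⟨fun i => ℓ (Pi.single i 1), fun z hz => ?_, ?_⟩)
  · rw [← hℓ]
    exact hℓ_le z ⟨1, mem_Ici.2 zero_le_one, z, subset_convexHull ℝ G hz, one_smul ℝ z⟩
  · simp [hℓ b, mul_comm]

end ConicDuality

section Moments

variable {X E : Type*} [MeasurableSpace X] [NormedAddCommGroup E] {K : Set X} {v : X → E}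
  {μ : Measure X}

theorem Continuous.integrable_of_measure_compl_eq_zero [TopologicalSpace X]
    [OpensMeasurableSpace X] [T2Space X] [IsFiniteMeasure μ] (hv : Continuous v)
    (hK : IsCompact K) (hμ : μ Kᶜ = 0) : Integrable v μ := by
  rw [← Measure.restrict_eq_self_of_ae_mem (mem_ae_iff.2 hμ)]
  exact hv.continuousOn.integrableOn_compact hK

theorem integral_mem_Ici_smul_convexHull [TopologicalSpace X] [OpensMeasurableSpace X]
    [T2Space X] [NormedSpace ℝ E] [FiniteDimensional ℝ E] [IsFiniteMeasure μ] (hv : Continuous v)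
    (hK : IsCompact K) (hKne : K.Nonempty) (hμ : μ Kᶜ = 0) :
    ∫ x, v x ∂μ ∈ Ici (0 : ℝ) • convexHull ℝ (v '' K) := by
  rcases eq_or_ne μ 0 with rfl | hμ₀
  · obtain ⟨x, hx⟩ := hKne
    exact ⟨0, self_mem_Ici, v x, subset_convexHull ℝ _ (mem_image_of_mem v hx), by simp⟩
  have : NeZero μ := ⟨hμ₀⟩
  rw [← measure_smul_average]
  refine ⟨_, measureReal_nonneg, _, Convex.average_mem (convex_convexHull ℝ _)
    (isCompact_convexHull (hK.image hv)).isClosed ?_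
    (hv.integrable_of_measure_compl_eq_zero hK hμ), rfl⟩
  filter_upwards [mem_ae_iff.2 hμ] with x hx
  exact subset_convexHull ℝ _ (mem_image_of_mem v hx)

theorem exists_integral_eq_of_mem_Ici_smul_convexHull [MeasurableSingletonClass X]
    [NormedSpace ℝ E] [CompleteSpace E] (hK : MeasurableSet K) {z : E}
    (hz : z ∈ Ici (0 : ℝ) • convexHull ℝ (v '' K)) :
    ∃ μ : Measure X, IsFiniteMeasure μ ∧ μ Kᶜ = 0 ∧ ∫ x, v x ∂μ = z := by
  obtain ⟨c, hc, y, hy, rfl⟩ := hz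
  obtain ⟨ι, _, w, p, hw₀, -, hp, rfl⟩ := mem_convexHull_iff_exists_fintype.1 hy
  choose x hxK hvx using hp
  let ν : ι → Measure X := fun i => ENNReal.ofReal (c * w i) • Measure.dirac (x i)
  have hν : ∀ i, Integrable v (ν i) := fun i =>
    ((integrable_const (v (x i))).congr (ae_eq_dirac v).symm).smul_measure ENNReal.ofReal_ne_top
  refine ⟨∑ i, ν i, ⟨?_⟩, ?_, ?_⟩
  · simp [ν, ENNReal.sum_lt_top]
  · simp [ν, Measure.dirac_apply' _ hK.compl, hxK]
  · dsimp only
    rw [integral_finsetSum_measure fun i _ => hν i, Finset.smul_sum]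
    refine Finset.sum_congr rfl fun i _ => ?_
    rw [integral_smul_measure, integral_dirac, hvx,
      ENNReal.toReal_ofReal (mul_nonneg hc (hw₀ i)), smul_smul]

theorem setOf_integral_eq_fiber_Ici_smul_convexHull {ι : Type*} [Fintype ι]
    [TopologicalSpace X] [OpensMeasurableSpace X] [T2Space X] [MeasurableSingletonClass X]
    (hK : IsCompact K) (hKne : K.Nonempty) {f : ι → X → ℝ} {g : X → ℝ}
    (hf : ∀ i, Continuous (f i)) (hg : Continuous g) (b : ι → ℝ) :
    {r : ℝ | ∃ ν : Measure X, IsFiniteMeasure ν ∧ ν Kᶜ = 0 ∧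
      (∀ i, ∫ x, f i x ∂ν = b i) ∧ r = ∫ x, g x ∂ν} =
      {r | (b, r) ∈ Ici (0 : ℝ) • convexHull ℝ ((fun x => (fun i => f i x, g x)) '' K)} := by
  set v : X → (ι → ℝ) × ℝ := fun x => (fun i => f i x, g x)
  have hv : Continuous v := (continuous_pi hf).prodMk hg
  have hmoments : ∀ ν : Measure X, IsFiniteMeasure ν → ν Kᶜ = 0 →
      ∫ x, v x ∂ν = (fun i => ∫ x, f i x ∂ν, ∫ x, g x ∂ν) := by
    intro ν _ hν
    have hint := hv.integrable_of_measure_compl_eq_zero hK hν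
    exact Prod.ext (funext fun i => by rw [fst_integral hint, eval_integral hint.fst.eval])
      (snd_integral hint)
  ext r
  constructor
  · rintro ⟨ν, hν, hνK, hνf, rfl⟩
    have := integral_mem_Ici_smul_convexHull hv hK hKne hνK
    rwa [hmoments ν hν hνK, funext hνf] at this
  · intro hr
    obtain ⟨ν, hν, hνK, hνv⟩ :=
      exists_integral_eq_of_mem_Ici_smul_convexHull hK.measurableSet hr
    rw [hmoments ν hν hνK, Prod.ext_iff, funext_iff] at hνv
    exact ⟨ν, hν, hνK, hνv.1, hνv.2.symm⟩

end Moments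

theorem stmt_0_general (n m : ℕ) (K : Set (Fin n → ℝ)) (hKne : K.Nonempty) (hK : IsCompact K)
    (a : Fin m → MvPolynomial (Fin n) ℝ) (R : MvPolynomial (Fin n) ℝ)
    (hRpos : ∀ x ∈ K, 0 < MvPolynomial.eval x R)
    (b : Fin m → ℝ)
    (hfeas : ∃ μ₀ : Measure (Fin n → ℝ), IsFiniteMeasure μ₀ ∧ μ₀ Kᶜ = 0 ∧
      ∀ i, ∫ x, MvPolynomial.eval x (a i) ∂μ₀ = b i) :
    (∃ μ : Measure (Fin n → ℝ), IsFiniteMeasure μ ∧ μ Kᶜ = 0 ∧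
        (∀ i, ∫ x, MvPolynomial.eval x (a i) ∂μ = b i) ∧
        ∫ x, MvPolynomial.eval x R ∂μ =
          sInf {r : ℝ | ∃ ν : Measure (Fin n → ℝ), IsFiniteMeasure ν ∧ ν Kᶜ = 0 ∧
            (∀ i, ∫ x, MvPolynomial.eval x (a i) ∂ν = b i) ∧
            r = ∫ x, MvPolynomial.eval x R ∂ν}) ∧
    sInf {r : ℝ | ∃ ν : Measure (Fin n → ℝ), IsFiniteMeasure ν ∧ ν Kᶜ = 0 ∧
        (∀ i, ∫ x, MvPolynomial.eval x (a i) ∂ν = b i) ∧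
        r = ∫ x, MvPolynomial.eval x R ∂ν} =
      sSup {s : ℝ | ∃ lam : Fin m → ℝ,
        (∀ x ∈ K, 0 ≤ MvPolynomial.eval x R - ∑ i, lam i * MvPolynomial.eval x (a i)) ∧
        s = ∑ i, b i * lam i} := by
  set v : (Fin n → ℝ) → (Fin m → ℝ) × ℝ :=
    fun x => (fun i => MvPolynomial.eval x (a i), MvPolynomial.eval x R)
  have hP := setOf_integral_eq_fiber_Ici_smul_convexHull hK hKne
    (fun i => MvPolynomial.continuous_eval (a i)) (MvPolynomial.continuous_eval R) b
  have hD : ∀ lam : Fin m → ℝ,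
      (∀ x ∈ K, 0 ≤ MvPolynomial.eval x R - ∑ i, lam i * MvPolynomial.eval x (a i)) ↔
        ∀ z ∈ v '' K, ∑ i, lam i * z.1 i ≤ z.2 := by
    simp [v, sub_nonneg]
  have hG : IsCompact (v '' K) := hK.image <|
    (continuous_pi fun i => MvPolynomial.continuous_eval (a i)).prodMk
      (MvPolynomial.continuous_eval R)
  have hGpos : ∀ z ∈ v '' K, 0 < z.2 := forall_mem_image.2 hRpos
  obtain ⟨r₀, hr₀⟩ : ∃ r₀, (b, r₀) ∈ Ici (0 : ℝ) • convexHull ℝ (v '' K) := by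
    obtain ⟨μ₀, hμ₀, hμ₀K, hμ₀a⟩ := hfeas
    exact ⟨_, hP.subset ⟨μ₀, hμ₀, hμ₀K, hμ₀a, rfl⟩⟩
  have hmin := csInf_mem_fiber_Ici_smul_convexHull hG hGpos hr₀
  rw [← hP] at hmin
  obtain ⟨ν, hν, hνK, hνa, hνR⟩ := hmin
  refine ⟨⟨ν, hν, hνK, hνa, hνR.symm⟩, ?_⟩
  rw [hP, csInf_fiber_eq_csSup_dual hG hGpos hr₀]
  simp only [hD]

theorem stmt_0 (n m d : ℕ) (K : Set (Fin n → ℝ)) (hKne : K.Nonempty) (hK : IsCompact K)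
    (a : Fin m → MvPolynomial (Fin n) ℝ) (R : MvPolynomial (Fin n) ℝ)
    (ha : ∀ i, (a i).totalDegree ≤ d) (hR : R.totalDegree ≤ d)
    (hRpos : ∀ x ∈ K, 0 < MvPolynomial.eval x R)
    (b : Fin m → ℝ)
    (hfeas : ∃ μ₀ : Measure (Fin n → ℝ), IsFiniteMeasure μ₀ ∧ μ₀ Kᶜ = 0 ∧
      ∀ i, ∫ x, MvPolynomial.eval x (a i) ∂μ₀ = b i) :
    (∃ μ : Measure (Fin n → ℝ), IsFiniteMeasure μ ∧ μ Kᶜ = 0 ∧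
        (∀ i, ∫ x, MvPolynomial.eval x (a i) ∂μ = b i) ∧
        ∫ x, MvPolynomial.eval x R ∂μ =
          sInf {r : ℝ | ∃ ν : Measure (Fin n → ℝ), IsFiniteMeasure ν ∧ ν Kᶜ = 0 ∧
            (∀ i, ∫ x, MvPolynomial.eval x (a i) ∂ν = b i) ∧
            r = ∫ x, MvPolynomial.eval x R ∂ν}) ∧
    sInf {r : ℝ | ∃ ν : Measure (Fin n → ℝ), IsFiniteMeasure ν ∧ ν Kᶜ = 0 ∧
        (∀ i, ∫ x, MvPolynomial.eval x (a i) ∂ν = b i) ∧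
        r = ∫ x, MvPolynomial.eval x R ∂ν} =
      sSup {s : ℝ | ∃ lam : Fin m → ℝ,
        (∀ x ∈ K, 0 ≤ MvPolynomial.eval x R - ∑ i, lam i * MvPolynomial.eval x (a i)) ∧
        s = ∑ i, b i * lam i} :=
  stmt_0_general n m K hKne hK a R hRpos b hfeas
end

section
/- Let K ⊆ ℝⁿ be a nonempty compact set, let f₁,…,f_m, R₁, R₂ be real polynomials with R₁(x) > 0 and R₂(x) > 0 for all x ∈ K, and let b ∈ ℝᵐ. Suppose there exist Borel measures μ₁, μ₂ supported in K with ∫ fᵢ dμ₁ − ∫ fᵢ dμ₂ = bᵢ for i = 1,…,m. Then the infimum of ∫ R₁ dμ₁ + ∫ R₂ dμ₂ over all pairs (μ₁, μ₂) of Borel measures supported in K satisfying ∫ fᵢ dμ₁ − ∫ fᵢ dμ₂ = bᵢ (i = 1,…,m) equals the supremum of b₁λ₁ + ⋯ + b_mλ_m over all λ ∈ ℝᵐ such that both R₁(x) − Σᵢ λᵢ fᵢ(x) ≥ 0 and R₂(x) + Σᵢ λᵢ fᵢ(x) ≥ 0 for every x ∈ K. -/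
/-!
Put `v x = (f x, R₁ x)` and `w x = (-f x, R₂ x)` in `ℝᵐ × ℝ`. The vectors `∫ v dμ₁ + ∫ w dμ₂` of
admissible pairs of measures fill exactly the cone `[0, ∞) • conv (v K ∪ w K)`: averages of `v` and
`w` lie in the hull, and sums of Dirac masses reach every point of it. Since `R₁, R₂ > 0` on the
compact set `K`, the hull is compact and misses `0`, so this cone `C` is closed. The primal value
is the lowest point of `C` above `b`, attained by closedness; a dual feasible `λ` is a half-space
`∑ λᵢ yᵢ ≤ y₀` containing `C`, and Farkas' lemma separating `(b, p - ε)` from `C` yields one with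
`bᵀλ > p - ε`.
-/

open MeasureTheory Set
open scoped Pointwise

section ConvexCone

variable {E : Type*} [NormedAddCommGroup E] [NormedSpace ℝ E]

/-- By Carathéodory, the hull is the union over `k ≤ finrank + 1` of the images of
`stdSimplex × sᵏ` under `(w, z) ↦ ∑ wᵢ • zᵢ`. -/
theorem IsCompact.convexHull [FiniteDimensional ℝ E] {s : Set E} (hs : IsCompact s) :
    IsCompact (_root_.convexHull ℝ s) := by
  let comb (k : ℕ) (p : (Fin k → ℝ) × (Fin k → E)) : E := ∑ i, p.1 i • p.2 i
  have hcomb : _root_.convexHull ℝ s = ⋃ k ∈ Finset.range (Module.finrank ℝ E + 2),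
      comb k '' (stdSimplex ℝ (Fin k) ×ˢ univ.pi fun _ => s) := by
    refine Subset.antisymm (fun x hx => ?_) ?_
    · obtain ⟨ι, _, z, w, hzs, hind, hw0, hw1, rfl⟩ := eq_pos_convex_span_of_mem_convexHull hx
      have hcard : Fintype.card ι < Module.finrank ℝ E + 2 := by
        have := hind.card_le_finrank_succ
        have := Submodule.finrank_le (vectorSpan ℝ (range z))
        omega
      let e := (Fintype.equivFin ι).symm
      refine mem_biUnion (Finset.mem_range.2 hcard)
        ⟨(w ∘ e, z ∘ e), ⟨⟨fun i => (hw0 _).le, ?_⟩, fun i _ => hzs ⟨_, rfl⟩⟩, ?_⟩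
      · simpa only [Function.comp_apply, e.sum_comp] using hw1
      · exact e.sum_comp fun i => w i • z i
    · simp only [iUnion_subset_iff]
      rintro k - _ ⟨⟨w, z⟩, ⟨⟨hw0, hw1⟩, hz⟩, rfl⟩
      exact (convex_convexHull ℝ s).sum_mem (fun i _ => hw0 i) hw1
        fun i _ => subset_convexHull ℝ s (hz i trivial)
  rw [hcomb]
  exact (Finset.range _).isCompact_biUnion fun k _ =>
    ((isCompact_stdSimplex ℝ _).prod (isCompact_univ_pi fun _ => hs)).image (by fun_prop)

/-- Near a point `y`, the cone only uses scalars up to `(‖y‖ + 1) / δ`, where `δ` bounds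
the norm on `s` from below; so locally it is the compact set `[0, (‖y‖ + 1) / δ] • s`. -/
theorem IsCompact.isClosed_Ici_smul {s : Set E} (hs : IsCompact s) (h0 : (0 : E) ∉ s) :
    IsClosed (Ici (0 : ℝ) • s) := by
  obtain ⟨δ, hδ, hball⟩ := Metric.isOpen_iff.1 hs.isClosed.isOpen_compl 0 h0
  have hδs : ∀ c ∈ s, δ ≤ ‖c‖ := fun c hc => by
    by_contra! h
    exact hball (mem_ball_zero_iff.2 h) hc
  refine isClosed_of_closure_subset fun y hy => ?_
  have hlocal : Metric.ball y 1 ∩ Ici (0 : ℝ) • s ⊆ Icc 0 ((‖y‖ + 1) / δ) • s := by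
    rintro _ ⟨hyz, t, ht, c, hc, rfl⟩
    refine ⟨t, ⟨ht, ?_⟩, c, hc, rfl⟩
    rw [le_div_iff₀ hδ]
    calc t * δ ≤ t * ‖c‖ := mul_le_mul_of_nonneg_left (hδs c hc) ht
      _ = ‖t • c‖ := by rw [norm_smul, Real.norm_of_nonneg ht]
      _ ≤ ‖y‖ + ‖t • c - y‖ := norm_le_insert' _ _
      _ ≤ ‖y‖ + 1 := by have := mem_ball_iff_norm.1 hyz; linarith
  have hy' := closure_mono hlocal
    (Metric.isOpen_ball.inter_closure ⟨Metric.mem_ball_self one_pos, hy⟩)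
  exact smul_subset_smul_right Icc_subset_Ici_self
    ((isCompact_Icc.smul_set hs).isClosed.closure_subset hy')

theorem Convex.add_mem_Ici_smul {s : Set E} (hs : Convex ℝ s) {x y : E}
    (hx : x ∈ Ici (0 : ℝ) • s) (hy : y ∈ Ici (0 : ℝ) • s) : x + y ∈ Ici (0 : ℝ) • s := by
  obtain ⟨a, ha : 0 ≤ a, c, hc, rfl⟩ := hx
  obtain ⟨b, hb : 0 ≤ b, d, hd, rfl⟩ := hy
  rcases (add_nonneg ha hb).eq_or_lt with hab | hab
  · obtain ⟨rfl, rfl⟩ : a = 0 ∧ b = 0 := ⟨by linarith, by linarith⟩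
    exact ⟨0, mem_Ici.2 le_rfl, c, hc, by simp⟩
  · refine ⟨a + b, hab.le, (a / (a + b)) • c + (b / (a + b)) • d,
      hs hc hd (by positivity) (by positivity) (by field_simp), ?_⟩
    dsimp only
    rw [smul_add, smul_smul, smul_smul, mul_div_cancel₀ _ hab.ne', mul_div_cancel₀ _ hab.ne']

def ProperCone.ofCompactConvex {s : Set E} (hs : IsCompact s) (hconv : Convex ℝ s)
    (hne : s.Nonempty) (h0 : (0 : E) ∉ s) : ProperCone ℝ E where
  carrier := Ici 0 • s
  add_mem' := hconv.add_mem_Ici_smul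
  zero_mem' := ⟨0, mem_Ici.2 le_rfl, hne.some, hne.some_mem, zero_smul ℝ _⟩
  smul_mem' := fun ⟨t, ht⟩ _ ⟨r, hr, c, hc, h⟩ =>
    ⟨t * r, mul_nonneg ht hr, c, hc, by rw [← h]; exact mul_smul t r c⟩
  isClosed' := hs.isClosed_Ici_smul h0

end ConvexCone

section ConicDuality

variable {ι : Type*} [Fintype ι]

theorem ContinuousLinearMap.exists_eq_sum_mul_add_mul (φ : (ι → ℝ) × ℝ →L[ℝ] ℝ) :
    ∃ (a : ι → ℝ) (c : ℝ), ∀ y, φ y = ∑ i, a i * y.1 i + c * y.2 := by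
  classical
  refine ⟨fun i => φ (Pi.single i 1, 0), φ (0, 1), fun y => ?_⟩
  have hy : y = ∑ i, y.1 i • ((Pi.single i 1 : ι → ℝ), (0 : ℝ)) +
      y.2 • ((0 : ι → ℝ), (1 : ℝ)) := by
    ext <;> simp [Prod.fst_sum, Prod.snd_sum, Finset.sum_apply, Pi.single_apply]
  conv_lhs => rw [hy]
  simp only [map_add, map_sum, map_smul, smul_eq_mul, mul_comm]

theorem forall_mem_Ici_smul_convexHull_iff {S : Set ((ι → ℝ) × ℝ)} (lam : ι → ℝ) :
    (∀ y ∈ Ici (0 : ℝ) • convexHull ℝ S, ∑ i, lam i * y.1 i ≤ y.2) ↔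
      ∀ y ∈ S, ∑ i, lam i * y.1 i ≤ y.2 := by
  refine ⟨fun h y hy =>
    h y ⟨1, mem_Ici.2 zero_le_one, y, subset_convexHull ℝ S hy, one_smul ℝ y⟩, ?_⟩
  rintro h _ ⟨t, ht : 0 ≤ t, c, hc, rfl⟩
  have hlin : IsLinearMap ℝ fun y : (ι → ℝ) × ℝ => ∑ i, lam i * y.1 i - y.2 :=
    ⟨fun y z => by simp only [Prod.fst_add, Prod.snd_add, Pi.add_apply, mul_add,
        Finset.sum_add_distrib]; ring,
      fun r y => by simp only [Prod.smul_fst, Prod.smul_snd, Pi.smul_apply, smul_eq_mul,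
        mul_sub, Finset.mul_sum, mul_left_comm]⟩
  have hc' : ∑ i, lam i * c.1 i - c.2 ≤ 0 :=
    convexHull_min (fun y hy => sub_nonpos.2 (h y hy)) (convex_halfSpace_le hlin 0) hc
  simp only [Prod.smul_fst, Prod.smul_snd, Pi.smul_apply, smul_eq_mul, mul_left_comm _ t,
    ← Finset.mul_sum]
  nlinarith

namespace ProperCone

variable {C : ProperCone ℝ ((ι → ℝ) × ℝ)} {b : ι → ℝ}

/-- Farkas' lemma applied to `(b, q) ∉ C`; the separating functional has positive last
coefficient because `(b, p) ∈ C` lies above `(b, q)`. -/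
theorem exists_dual_gt {p q : ℝ} (hp : (b, p) ∈ C) (hq : (b, q) ∉ C) (hqp : q < p) :
    ∃ lam : ι → ℝ, (∀ y ∈ C, ∑ i, lam i * y.1 i ≤ y.2) ∧ q < ∑ i, b i * lam i := by
  obtain ⟨φ, hφC, hφq⟩ := C.hyperplane_separation_point hq
  obtain ⟨a, c, hφ⟩ := φ.exists_eq_sum_mul_add_mul
  have hφp := hφC _ hp
  rw [hφ] at hφp hφq
  have hc : 0 < c := by nlinarith
  have hlam : ∀ z : ι → ℝ, ∑ i, -a i / c * z i = -(∑ i, a i * z i) / c := fun z => by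
    rw [← Finset.sum_neg_distrib, Finset.sum_div]
    exact Finset.sum_congr rfl fun i _ => by ring
  refine ⟨fun i => -a i / c, fun y hy => ?_, ?_⟩
  · have := hφC y hy
    rw [hφ] at this
    rw [hlam, div_le_iff₀ hc]
    linarith
  · simp only [mul_comm (b _), hlam]
    rw [lt_div_iff₀ hc]
    linarith

theorem sInf_slice_eq_sSup_dual (hprimal : ∃ r, (b, r) ∈ C)
    (hdual : ∃ lam : ι → ℝ, ∀ y ∈ C, ∑ i, lam i * y.1 i ≤ y.2) :
    sInf {r | (b, r) ∈ C} =
      sSup {s | ∃ lam : ι → ℝ, (∀ y ∈ C, ∑ i, lam i * y.1 i ≤ y.2) ∧ s = ∑ i, b i * lam i} := by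
  have hweak : ∀ lam : ι → ℝ, (∀ y ∈ C, ∑ i, lam i * y.1 i ≤ y.2) →
      ∀ r, (b, r) ∈ C → ∑ i, b i * lam i ≤ r := fun lam hlam r hr => by
    simpa only [mul_comm (b _)] using hlam _ hr
  obtain ⟨lam₀, hlam₀⟩ := hdual
  have hbdd : BddBelow {r | (b, r) ∈ C} := ⟨_, hweak lam₀ hlam₀⟩
  have hmin : (b, sInf {r | (b, r) ∈ C}) ∈ C :=
    (C.isClosed.preimage (by fun_prop)).csInf_mem hprimal hbdd
  symm
  refine csSup_eq_of_forall_le_of_forall_lt_exists_gt ⟨_, lam₀, hlam₀, rfl⟩ ?_ ?_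
  · rintro _ ⟨lam, hlam, rfl⟩
    exact hweak lam hlam _ hmin
  · intro q hq
    obtain ⟨lam, hlam, hgt⟩ := exists_dual_gt hmin (fun h => (csInf_le hbdd h).not_gt hq) hq
    exact ⟨_, ⟨lam, hlam, rfl⟩, hgt⟩

end ProperCone

end ConicDuality

section Moments

variable {X E : Type*} [MeasurableSpace X] [NormedAddCommGroup E] {μ : Measure X} {K : Set X}

theorem integral_mem_Ici_smul [NormedSpace ℝ E] [CompleteSpace E] [IsFiniteMeasure μ] {s : Set E}
    (hconv : Convex ℝ s) (hs : IsClosed s) (hne : s.Nonempty) {g : X → E} (hg : Integrable g μ)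
    (hgs : ∀ᵐ x ∂μ, g x ∈ s) : ∫ x, g x ∂μ ∈ Ici (0 : ℝ) • s := by
  rcases eq_zero_or_neZero μ with rfl | _
  · exact ⟨0, mem_Ici.2 le_rfl, hne.some, hne.some_mem, by simp⟩
  · exact ⟨μ.real univ, measureReal_nonneg, _, hconv.average_mem hs hgs hg,
      measure_smul_average μ g⟩

variable [TopologicalSpace X] [T2Space X] [OpensMeasurableSpace X]

theorem Continuous.integrable_of_measure_compl_eq_zero_s12 [IsFiniteMeasureOnCompacts μ] {g : X → E}
    (hg : Continuous g) (hK : IsCompact K) (hμ : μ Kᶜ = 0) : Integrable g μ := by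
  rw [← Measure.restrict_eq_self_of_ae_mem (mem_ae_iff.2 hμ)]
  exact hg.continuousOn.integrableOn_compact hK

variable [NormedSpace ℝ E]

def pairMoments (K : Set X) (v w : X → E) : Set E :=
  {y | ∃ μ₁ μ₂ : Measure X, IsFiniteMeasure μ₁ ∧ IsFiniteMeasure μ₂ ∧ μ₁ Kᶜ = 0 ∧ μ₂ Kᶜ = 0 ∧
    ∫ x, v x ∂μ₁ + ∫ x, w x ∂μ₂ = y}

variable {v w : X → E}

theorem smul_add_smul_mem_pairMoments (hK : IsCompact K) (hv : Continuous v) (hw : Continuous w)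
    {y z : E} (hy : y ∈ pairMoments K v w) (hz : z ∈ pairMoments K v w) {a b : ℝ} (ha : 0 ≤ a)
    (hb : 0 ≤ b) : a • y + b • z ∈ pairMoments K v w := by
  obtain ⟨μ₁, μ₂, _, _, hμ₁, hμ₂, rfl⟩ := hy
  obtain ⟨ν₁, ν₂, _, _, hν₁, hν₂, rfl⟩ := hz
  refine ⟨a.toNNReal • μ₁ + b.toNNReal • ν₁, a.toNNReal • μ₂ + b.toNNReal • ν₂, inferInstance,
    inferInstance, by simp [hμ₁, hν₁], by simp [hμ₂, hν₂], ?_⟩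
  rw [integral_add_measure (hv.integrable_of_measure_compl_eq_zero_s12 hK (by simp [hμ₁]))
      (hv.integrable_of_measure_compl_eq_zero_s12 hK (by simp [hν₁])),
    integral_add_measure (hw.integrable_of_measure_compl_eq_zero_s12 hK (by simp [hμ₂]))
      (hw.integrable_of_measure_compl_eq_zero_s12 hK (by simp [hν₂]))]
  simp only [integral_smul_nnreal_measure, NNReal.smul_def, Real.coe_toNNReal _ ha,
    Real.coe_toNNReal _ hb, smul_add]
  abel

theorem convex_pairMoments (hK : IsCompact K) (hv : Continuous v) (hw : Continuous w) :
    Convex ℝ (pairMoments K v w) :=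
  fun _ hy _ hz _ _ ha hb _ => smul_add_smul_mem_pairMoments hK hv hw hy hz ha hb

theorem image_union_image_subset_pairMoments [SecondCountableTopology E] [CompleteSpace E]
    (hK : IsCompact K) (hv : Continuous v) (hw : Continuous w) :
    v '' K ∪ w '' K ⊆ pairMoments K v w := by
  have hdirac : ∀ x ∈ K, Measure.dirac x Kᶜ = 0 := fun x hx => by
    simp [Measure.dirac_apply' x hK.isClosed.measurableSet.compl, hx]
  rintro _ (⟨x, hx, rfl⟩ | ⟨x, hx, rfl⟩)
  · exact ⟨Measure.dirac x, 0, inferInstance, inferInstance, hdirac x hx, rfl, by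
      rw [integral_dirac' _ _ hv.stronglyMeasurable, integral_zero_measure, add_zero]⟩
  · exact ⟨0, Measure.dirac x, inferInstance, inferInstance, rfl, hdirac x hx, by
      rw [integral_dirac' _ _ hw.stronglyMeasurable, integral_zero_measure, zero_add]⟩

theorem pairMoments_eq [FiniteDimensional ℝ E] (hKne : K.Nonempty) (hK : IsCompact K)
    (hv : Continuous v) (hw : Continuous w) :
    pairMoments K v w = Ici (0 : ℝ) • convexHull ℝ (v '' K ∪ w '' K) := by
  refine Subset.antisymm ?_ ?_
  · rintro _ ⟨μ₁, μ₂, _, _, hμ₁, hμ₂, rfl⟩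
    have hhull := ((hK.image hv).union (hK.image hw)).convexHull
    have hne : (convexHull ℝ (v '' K ∪ w '' K)).Nonempty :=
      ((hKne.image v).mono subset_union_left).convexHull
    refine (convex_convexHull ℝ _).add_mem_Ici_smul
      (integral_mem_Ici_smul (convex_convexHull ℝ _) hhull.isClosed hne
        (hv.integrable_of_measure_compl_eq_zero_s12 hK hμ₁) ?_)
      (integral_mem_Ici_smul (convex_convexHull ℝ _) hhull.isClosed hne
        (hw.integrable_of_measure_compl_eq_zero_s12 hK hμ₂) ?_)
    · exact Filter.Eventually.mono (mem_ae_iff.2 hμ₁) fun x hx =>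
        subset_convexHull ℝ _ (Or.inl ⟨x, hx, rfl⟩)
    · exact Filter.Eventually.mono (mem_ae_iff.2 hμ₂) fun x hx =>
        subset_convexHull ℝ _ (Or.inr ⟨x, hx, rfl⟩)
  · rintro _ ⟨t, ht, c, hc, rfl⟩
    have hc' := convexHull_min (image_union_image_subset_pairMoments hK hv hw)
      (convex_pairMoments hK hv hw) hc
    simpa using smul_add_smul_mem_pairMoments hK hv hw hc' hc' ht le_rfl

end Moments

section MomentProblem

variable {X ι : Type*} {K : Set X}

def momentIntegrand (F : ι → X → ℝ) (ρ : X → ℝ) (x : X) : (ι → ℝ) × ℝ := (fun i => F i x, ρ x)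

variable {F : ι → X → ℝ} {ρ ρ₁ ρ₂ : X → ℝ}

theorem forall_mem_momentIntegrand_image_iff [Fintype ι] (lam : ι → ℝ) :
    ((∀ x ∈ K, 0 ≤ ρ₁ x - ∑ i, lam i * F i x) ∧ (∀ x ∈ K, 0 ≤ ρ₂ x + ∑ i, lam i * F i x)) ↔
      ∀ y ∈ momentIntegrand F ρ₁ '' K ∪ momentIntegrand (-F) ρ₂ '' K,
        ∑ i, lam i * y.1 i ≤ y.2 := by
  simp only [mem_union, or_imp, forall_and, forall_mem_image, momentIntegrand, Pi.neg_apply,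
    mul_neg, Finset.sum_neg_distrib, sub_nonneg, neg_le_iff_add_nonneg]

variable [TopologicalSpace X]

theorem continuous_momentIntegrand (hF : ∀ i, Continuous (F i)) (hρ : Continuous ρ) :
    Continuous (momentIntegrand F ρ) :=
  (continuous_pi fun i => hF i).prodMk hρ

variable [T2Space X] [MeasurableSpace X] [OpensMeasurableSpace X] [Fintype ι]

theorem integral_momentIntegrand {μ : Measure X} [IsFiniteMeasure μ] (hK : IsCompact K)
    (hμ : μ Kᶜ = 0) (hF : ∀ i, Continuous (F i)) (hρ : Continuous ρ) :
    ∫ x, momentIntegrand F ρ x ∂μ = (fun i => ∫ x, F i x ∂μ, ∫ x, ρ x ∂μ) := by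
  have hFμ : ∀ i, Integrable (F i) μ := fun i =>
    (hF i).integrable_of_measure_compl_eq_zero_s12 hK hμ
  rw [show momentIntegrand F ρ = fun x => ((fun i => F i x), ρ x) from rfl,
    integral_pair (Integrable.of_eval hFμ) (hρ.integrable_of_measure_compl_eq_zero_s12 hK hμ)]
  exact Prod.ext (funext (eval_integral hFμ)) rfl

theorem integral_momentIntegrand_add_eq_iff {μ₁ μ₂ : Measure X} [IsFiniteMeasure μ₁]
    [IsFiniteMeasure μ₂] (hK : IsCompact K) (hμ₁ : μ₁ Kᶜ = 0) (hμ₂ : μ₂ Kᶜ = 0)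
    (hF : ∀ i, Continuous (F i)) (hρ₁ : Continuous ρ₁) (hρ₂ : Continuous ρ₂) {b : ι → ℝ}
    {r : ℝ} :
    ∫ x, momentIntegrand F ρ₁ x ∂μ₁ + ∫ x, momentIntegrand (-F) ρ₂ x ∂μ₂ = (b, r) ↔
      (∀ i, ∫ x, F i x ∂μ₁ - ∫ x, F i x ∂μ₂ = b i) ∧ r = ∫ x, ρ₁ x ∂μ₁ + ∫ x, ρ₂ x ∂μ₂ := by
  rw [integral_momentIntegrand hK hμ₁ hF hρ₁,
    integral_momentIntegrand (F := -F) hK hμ₂ (fun i => (hF i).neg) hρ₂]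
  simp [Prod.ext_iff, funext_iff, integral_neg, sub_eq_add_neg, eq_comm]

theorem mk_mem_pairMoments_iff (hK : IsCompact K) (hF : ∀ i, Continuous (F i))
    (hρ₁ : Continuous ρ₁) (hρ₂ : Continuous ρ₂) {b : ι → ℝ} {r : ℝ} :
    (b, r) ∈ pairMoments K (momentIntegrand F ρ₁) (momentIntegrand (-F) ρ₂) ↔
      ∃ μ₁ μ₂ : Measure X, IsFiniteMeasure μ₁ ∧ IsFiniteMeasure μ₂ ∧ μ₁ Kᶜ = 0 ∧ μ₂ Kᶜ = 0 ∧
        (∀ i, ∫ x, F i x ∂μ₁ - ∫ x, F i x ∂μ₂ = b i) ∧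
        r = ∫ x, ρ₁ x ∂μ₁ + ∫ x, ρ₂ x ∂μ₂ :=
  exists₂_congr fun _ _ => and_congr_right fun _ => and_congr_right fun _ =>
    and_congr_right fun hμ₁ => and_congr_right fun hμ₂ =>
      integral_momentIntegrand_add_eq_iff hK hμ₁ hμ₂ hF hρ₁ hρ₂

theorem sInf_moments_eq_sSup_dual (hKne : K.Nonempty) (hK : IsCompact K)
    (hF : ∀ i, Continuous (F i)) (hρ₁ : Continuous ρ₁) (hρ₂ : Continuous ρ₂)
    (hρ₁K : ∀ x ∈ K, 0 < ρ₁ x) (hρ₂K : ∀ x ∈ K, 0 < ρ₂ x) (b : ι → ℝ)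
    (hfeas : ∃ μ₁ μ₂ : Measure X, IsFiniteMeasure μ₁ ∧ IsFiniteMeasure μ₂ ∧
      μ₁ Kᶜ = 0 ∧ μ₂ Kᶜ = 0 ∧ ∀ i, ∫ x, F i x ∂μ₁ - ∫ x, F i x ∂μ₂ = b i) :
    sInf {r : ℝ | ∃ μ₁ μ₂ : Measure X, IsFiniteMeasure μ₁ ∧ IsFiniteMeasure μ₂ ∧
        μ₁ Kᶜ = 0 ∧ μ₂ Kᶜ = 0 ∧ (∀ i, ∫ x, F i x ∂μ₁ - ∫ x, F i x ∂μ₂ = b i) ∧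
        r = ∫ x, ρ₁ x ∂μ₁ + ∫ x, ρ₂ x ∂μ₂} =
    sSup {s : ℝ | ∃ lam : ι → ℝ, (∀ x ∈ K, 0 ≤ ρ₁ x - ∑ i, lam i * F i x) ∧
        (∀ x ∈ K, 0 ≤ ρ₂ x + ∑ i, lam i * F i x) ∧ s = ∑ i, b i * lam i} := by
  set S := momentIntegrand F ρ₁ '' K ∪ momentIntegrand (-F) ρ₂ '' K
  have hv := continuous_momentIntegrand hF hρ₁
  have hw := continuous_momentIntegrand (F := -F) (fun i => (hF i).neg) hρ₂
  have hpos : ∀ c ∈ convexHull ℝ S, 0 < c.2 := fun c hc =>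
    convexHull_min (fun y hy => by
        obtain ⟨x, hx, rfl⟩ | ⟨x, hx, rfl⟩ := hy
        exacts [hρ₁K x hx, hρ₂K x hx])
      (convex_halfSpace_gt (LinearMap.snd ℝ (ι → ℝ) ℝ).isLinear 0) hc
  let C := ProperCone.ofCompactConvex ((hK.image hv).union (hK.image hw)).convexHull
    (convex_convexHull ℝ S) ((hKne.image _).mono subset_union_left).convexHull
    fun h => (hpos 0 h).false
  have hC : (C : Set ((ι → ℝ) × ℝ)) = pairMoments K _ _ := (pairMoments_eq hKne hK hv hw).symm
  have hCdual : ∀ lam : ι → ℝ, (∀ y ∈ C, ∑ i, lam i * y.1 i ≤ y.2) ↔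
      (∀ x ∈ K, 0 ≤ ρ₁ x - ∑ i, lam i * F i x) ∧ (∀ x ∈ K, 0 ≤ ρ₂ x + ∑ i, lam i * F i x) :=
    fun lam => (forall_mem_Ici_smul_convexHull_iff lam).trans
      (forall_mem_momentIntegrand_image_iff lam).symm
  have hprimal : ∀ r, (b, r) ∈ C ↔ _ := fun r => by
    rw [← SetLike.mem_coe, hC, mk_mem_pairMoments_iff hK hF hρ₁ hρ₂]
  obtain ⟨μ₁, μ₂, h₁, h₂, hμ₁, hμ₂, hb⟩ := hfeas
  have hzero : ∀ y ∈ C, ∑ i, (0 : ι → ℝ) i * y.1 i ≤ y.2 := (hCdual 0).2 <| by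
    simp only [Pi.zero_apply, zero_mul, Finset.sum_const_zero, sub_zero, add_zero]
    exact ⟨fun x hx => (hρ₁K x hx).le, fun x hx => (hρ₂K x hx).le⟩
  convert C.sInf_slice_eq_sSup_dual
    ⟨_, (hprimal _).2 ⟨μ₁, μ₂, h₁, h₂, hμ₁, hμ₂, hb, rfl⟩⟩ ⟨0, hzero⟩ using 2
  · exact Set.ext fun r => (hprimal r).symm
  · exact Set.ext fun s => exists_congr fun lam => by rw [hCdual, and_assoc]

end MomentProblem

theorem stmt_12 (n m : ℕ) (K : Set (Fin n → ℝ)) (hKne : K.Nonempty) (hK : IsCompact K)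
    (f : Fin m → MvPolynomial (Fin n) ℝ) (R₁ R₂ : MvPolynomial (Fin n) ℝ)
    (hR₁ : ∀ x ∈ K, 0 < MvPolynomial.eval x R₁)
    (hR₂ : ∀ x ∈ K, 0 < MvPolynomial.eval x R₂)
    (b : Fin m → ℝ)
    (hfeas : ∃ μ₁ μ₂ : Measure (Fin n → ℝ), IsFiniteMeasure μ₁ ∧ IsFiniteMeasure μ₂ ∧
      μ₁ Kᶜ = 0 ∧ μ₂ Kᶜ = 0 ∧
      ∀ i, ∫ x, MvPolynomial.eval x (f i) ∂μ₁ - ∫ x, MvPolynomial.eval x (f i) ∂μ₂ = b i) :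
    sInf {r : ℝ | ∃ μ₁ μ₂ : Measure (Fin n → ℝ), IsFiniteMeasure μ₁ ∧ IsFiniteMeasure μ₂ ∧
        μ₁ Kᶜ = 0 ∧ μ₂ Kᶜ = 0 ∧
        (∀ i, ∫ x, MvPolynomial.eval x (f i) ∂μ₁ -
          ∫ x, MvPolynomial.eval x (f i) ∂μ₂ = b i) ∧
        r = ∫ x, MvPolynomial.eval x R₁ ∂μ₁ + ∫ x, MvPolynomial.eval x R₂ ∂μ₂} =
    sSup {s : ℝ | ∃ lam : Fin m → ℝ,
        (∀ x ∈ K, 0 ≤ MvPolynomial.eval x R₁ - ∑ i, lam i * MvPolynomial.eval x (f i)) ∧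
        (∀ x ∈ K, 0 ≤ MvPolynomial.eval x R₂ + ∑ i, lam i * MvPolynomial.eval x (f i)) ∧
        s = ∑ i, b i * lam i} :=
  sInf_moments_eq_sSup_dual (F := fun i x => MvPolynomial.eval x (f i)) hKne hK
    (fun i => MvPolynomial.continuous_eval (f i)) (MvPolynomial.continuous_eval R₁)
    (MvPolynomial.continuous_eval R₂) hR₁ hR₂ b hfeas
end
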